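/- Let (X,d,μ) be a locally compact metric measure space such that z_r ∈ L¹_loc(X,μ) for all sufficiently small r > 0, and such that (z_r/r)·μ converges weakly to 0 as r ↓ 0, i.e. ∫_X φ · (z_r/r) dμ → 0 for every compactly supported continuous function φ. Then a Lipschitz function u : X → ℝ admits a weak AMV Laplacian if and only if it admits a weak SAMV Laplacian, and in that case the two weak Laplacians coincide. -/

import Mathlib

/-!
Since `1 + μ(B_r(x))/μ(B_r(y)) = 2 - δ_r(x, y)`, the difference of the two operators is
`Δ̃_r u(x) - Δ_r u(x) = -(2r²)⁻¹ ⨍_{B_r(x)} (u(y) - u(x)) δ_r(x, y) dμ(y)`, which a `K`-Lipschitz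
`u` bounds by `(K/2) z_r(x)/r`. Tested against `φ`, the two weak operators therefore differ by at
most `∫ (K/2)|φ| z_r/r dμ → 0`. The averages defining `Δ̃_r u(x)` are genuine integrals only where
`y ↦ 1/μ(B_r(y))` is integrable on `B_r(x)`; by Tonelli this holds for almost every `x`.
Tonelli and the measurability of `x ↦ Δ_r u(x)` need the Borel σ-algebra of `X × X` to be the
product one, i.e. `X` separable: disjoint balls of positive measure are countably many, so a
maximal `ε`-separated set is a countable `ε`-net.
-/

open MeasureTheory Filter Metric Set
open scoped ENNReal Topology NNReal

/-- The AMV `r`-operator for a continuous function (`u*(x) = u(x)`). -/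
noncomputable def amvOp {X : Type*} [MetricSpace X] [MeasurableSpace X]
    (μ : Measure X) (u : X → ℝ) (x : X) (r : ℝ) : ℝ :=
  (1 / r ^ 2) * ⨍ y in ball x r, (u y - u x) ∂μ

/-- The SAMV `r`-operator for a continuous function (`u*(x) = u(x)`). -/
noncomputable def samvOp {X : Type*} [MetricSpace X] [MeasurableSpace X]
    (μ : Measure X) (u : X → ℝ) (x : X) (r : ℝ) : ℝ :=
  (1 / (2 * r ^ 2)) *
    ⨍ y in ball x r, (u y - u x) * (1 + (μ (ball x r)).toReal / (μ (ball y r)).toReal) ∂μ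

/-- The averaged absolute distortion `z_r(x) = ⨍_{B_r(x)} |1 − μ(B_r(x))/μ(B_r(y))| dμ(y)`. -/
noncomputable def zr {X : Type*} [MetricSpace X] [MeasurableSpace X]
    (μ : Measure X) (x : X) (r : ℝ) : ℝ :=
  ⨍ y in ball x r, |1 - (μ (ball x r)).toReal / (μ (ball y r)).toReal| ∂μ

section MeasureOfBalls

variable {X : Type*} [MetricSpace X] [MeasurableSpace X] {μ : Measure X}

theorem sigmaFinite_of_measure_ball_lt_top (h : ∀ x r, μ (ball x r) < ∞) : SigmaFinite μ := by
  rcases isEmpty_or_nonempty X with hX | ⟨⟨x₀⟩⟩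
  · rw [Measure.eq_zero_of_isEmpty μ]
    infer_instance
  refine Measure.sigmaFinite_of_countable (countable_range fun n : ℕ => ball x₀ n)
    (forall_mem_range.2 fun n => h x₀ n) ?_
  rw [sUnion_range, iUnion_ball_nat]

theorem secondCountableTopology_of_measure_ball_pos [OpensMeasurableSpace X] [SFinite μ]
    (h : ∀ x r, 0 < r → 0 < μ (ball x r)) : SecondCountableTopology X := by
  refine Metric.secondCountable_of_almost_dense_set fun ε hε => ?_
  obtain ⟨N, hN⟩ : ∃ N : Set X, Maximal (fun N => N ⊆ univ ∧ IsSeparated ε.toNNReal N) N := by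
    refine zorn_subset {N | N ⊆ univ ∧ IsSeparated ε.toNNReal N} fun c hc hchain => ?_
    refine ⟨⋃₀ c, ⟨subset_univ _, ?_⟩, fun s hs => subset_sUnion_of_mem hs⟩
    exact (pairwise_sUnion hchain.directedOn).2 fun s hs => (hc hs).2
  refine ⟨N, ?_, fun x => ?_⟩
  · have hdisj : Pairwise (Function.onFun Disjoint fun p : N => ball (p : X) (ε / 2)) := by
      intro p q hpq
      refine ball_disjoint_ball ?_
      have : ENNReal.ofReal ε < edist (p : X) q := hN.1.2 p.2 q.2 (Subtype.coe_ne_coe.2 hpq)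
      rw [edist_dist, ENNReal.ofReal_lt_ofReal_iff_of_nonneg hε.le] at this
      linarith
    have := Measure.countable_meas_pos_of_disjoint_iUnion (μ := μ)
      (fun _ => measurableSet_ball) hdisj
    have hpos : {p : N | 0 < μ (ball (p : X) (ε / 2))} = univ :=
      eq_univ_of_forall fun p => h p _ (half_pos hε)
    rw [hpos, countable_univ_iff] at this
    exact countable_coe_iff.1 this
  · obtain ⟨y, hy, hxy⟩ := mem_iUnion₂.1
      ((IsCover.of_maximal_isSeparated hN).subset_iUnion_closedBall (mem_univ x))
    exact ⟨y, hy, by simpa [Real.coe_toNNReal _ hε.le] using hxy⟩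

end MeasureOfBalls

section Fubini

variable {X : Type*} [MetricSpace X] [MeasurableSpace X] [OpensMeasurableSpace X]
  [SecondCountableTopology X] {μ : Measure X} [SFinite μ] {r : ℝ}

theorem measurableSet_setOf_mem_ball (r : ℝ) : MeasurableSet {p : X × X | p.2 ∈ ball p.1 r} :=
  (isOpen_lt (continuous_snd.dist continuous_fst) continuous_const).measurableSet

theorem measurable_measure_ball (μ : Measure X) [SFinite μ] (r : ℝ) :
    Measurable fun x => μ (ball x r) :=
  measurable_measure_prodMk_left (measurableSet_setOf_mem_ball r)

theorem Measurable.setLIntegral_ball {f : X × X → ℝ≥0∞} (hf : Measurable f) :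
    Measurable fun x => ∫⁻ y in ball x r, f (x, y) ∂μ := by
  simp_rw [← lintegral_indicator measurableSet_ball]
  exact (hf.indicator (measurableSet_setOf_mem_ball r)).lintegral_prod_right'

theorem Measurable.setIntegral_ball {f : X × X → ℝ} (hf : Measurable f) :
    Measurable fun x => ∫ y in ball x r, f (x, y) ∂μ := by
  simp_rw [← integral_indicator measurableSet_ball]
  exact ((hf.indicator (measurableSet_setOf_mem_ball r)).stronglyMeasurable
    |>.integral_prod_right').measurable

theorem Measurable.setAverage_ball {f : X × X → ℝ} (hf : Measurable f) :
    Measurable fun x => ⨍ y in ball x r, f (x, y) ∂μ := by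
  simp_rw [setAverage_eq, measureReal_def, smul_eq_mul]
  exact (measurable_measure_ball μ r).ennreal_toReal.inv.mul hf.setIntegral_ball

theorem lintegral_setLIntegral_inv_measure_ball_le (s : Set X) :
    ∫⁻ x in s, ∫⁻ y in ball x r, (μ (ball y r))⁻¹ ∂μ ∂μ ≤ μ (thickening r s) := by
  have hf : Measurable fun p : X × X => {q : X × X | q.2 ∈ ball q.1 r}.indicator
      (fun q => (μ (ball q.2 r))⁻¹) p :=
    ((measurable_measure_ball μ r).comp measurable_snd).inv.indicator
      (measurableSet_setOf_mem_ball r)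
  calc ∫⁻ x in s, ∫⁻ y in ball x r, (μ (ball y r))⁻¹ ∂μ ∂μ
      = ∫⁻ y, ∫⁻ x in s, {q : X × X | q.2 ∈ ball q.1 r}.indicator
          (fun q => (μ (ball q.2 r))⁻¹) (x, y) ∂μ ∂μ := by
        simp_rw [← lintegral_indicator measurableSet_ball]
        exact lintegral_lintegral_swap hf.aemeasurable
    _ = ∫⁻ y, (μ (ball y r))⁻¹ * μ (s ∩ ball y r) ∂μ := by
        refine lintegral_congr fun y => ?_
        have : ∀ x, {q : X × X | q.2 ∈ ball q.1 r}.indicator (fun q => (μ (ball q.2 r))⁻¹) (x, y)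
            = (ball y r).indicator (fun _ => (μ (ball y r))⁻¹) x := by
          intro x
          simp [indicator, dist_comm]
        simp_rw [this, lintegral_indicator_const measurableSet_ball,
          Measure.restrict_apply measurableSet_ball, inter_comm]
    _ ≤ ∫⁻ y, (thickening r s).indicator 1 y ∂μ := by
        refine lintegral_mono fun y => ?_
        by_cases hy : y ∈ thickening r s
        · rw [indicator_of_mem hy, Pi.one_apply]
          calc (μ (ball y r))⁻¹ * μ (s ∩ ball y r) ≤ (μ (ball y r))⁻¹ * μ (ball y r) := by
                gcongr
                exact inter_subset_right
            _ ≤ 1 := ENNReal.inv_mul_le_one _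
        · have : s ∩ ball y r = ∅ := by
            refine eq_empty_of_forall_notMem fun x hx => hy ?_
            exact mem_thickening_iff.2 ⟨x, hx.1, mem_ball'.1 hx.2⟩
          simp [this]
    _ = μ (thickening r s) := lintegral_indicator_one isOpen_thickening.measurableSet

theorem ae_integrableOn_inv_measure_ball (h : ∀ x r, μ (ball x r) < ∞) (r : ℝ) :
    ∀ᵐ x ∂μ, IntegrableOn (fun y => (μ (ball y r)).toReal⁻¹) (ball x r) μ := by
  rcases isEmpty_or_nonempty X with hX | ⟨⟨x₀⟩⟩
  · exact ae_of_all _ isEmptyElim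
  have hm := measurable_measure_ball μ r
  suffices ∀ᵐ x ∂μ.restrict (⋃ n : ℕ, ball x₀ n),
      IntegrableOn (fun y => (μ (ball y r)).toReal⁻¹) (ball x r) μ by
    rwa [iUnion_ball_nat, Measure.restrict_univ] at this
  refine (ae_restrict_iUnion_iff _ _).2 fun n => ?_
  have hfin : ∫⁻ x in ball x₀ n, ∫⁻ y in ball x r, (μ (ball y r))⁻¹ ∂μ ∂μ ≠ ∞ :=
    ((lintegral_setLIntegral_inv_measure_ball_le _).trans_lt
      ((measure_mono (thickening_ball x₀ r n)).trans_lt (h x₀ _))).ne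
  filter_upwards [ae_lt_top' (hm.comp measurable_snd).inv.setLIntegral_ball.aemeasurable hfin]
    with x hx
  simp_rw [← ENNReal.toReal_inv]
  exact integrable_toReal_of_lintegral_ne_top hm.inv.aemeasurable hx.ne

end Fubini

theorem abs_setAverage_mul_le {α : Type*} [MeasurableSpace α] {ν : Measure α} {s : Set α}
    {f g : α → ℝ} {C : ℝ} (hfC : ∀ᵐ a ∂ν.restrict s, |f a| ≤ C) (hg : IntegrableOn g s ν) :
    |⨍ a in s, f a * g a ∂ν| ≤ C * ⨍ a in s, |g a| ∂ν := by
  simp only [setAverage_eq, smul_eq_mul, abs_mul, abs_inv, abs_of_nonneg measureReal_nonneg]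
  have h := norm_integral_le_of_norm_le (hg.abs.const_mul C)
    (hfC.mono fun a ha => by rw [Real.norm_eq_abs, abs_mul]; gcongr)
  rw [Real.norm_eq_abs, integral_const_mul] at h
  calc (ν.real s)⁻¹ * |∫ a in s, f a * g a ∂ν| ≤ (ν.real s)⁻¹ * (C * ∫ a in s, |g a| ∂ν) := by
        gcongr
    _ = C * ((ν.real s)⁻¹ * ∫ a in s, |g a| ∂ν) := by ring

section Operators

variable {X : Type*} [MetricSpace X] [MeasurableSpace X] {μ : Measure X} {u : X → ℝ} {x : X}
  {r : ℝ}

theorem samvOp_sub_amvOp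
    (hu : IntegrableOn (fun y => u y - u x) (ball x r) μ)
    (hδ : IntegrableOn (fun y => (u y - u x) * (1 - (μ (ball x r)).toReal / (μ (ball y r)).toReal))
      (ball x r) μ) :
    samvOp μ u x r - amvOp μ u x r = -(1 / (2 * r ^ 2)) *
      ⨍ y in ball x r, (u y - u x) * (1 - (μ (ball x r)).toReal / (μ (ball y r)).toReal) ∂μ := by
  have hsplit : (fun y => (u y - u x) * (1 + (μ (ball x r)).toReal / (μ (ball y r)).toReal)) =
      fun y => 2 * (u y - u x) -
        (u y - u x) * (1 - (μ (ball x r)).toReal / (μ (ball y r)).toReal) := by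
    funext y
    ring
  simp only [samvOp, amvOp, setAverage_eq, smul_eq_mul]
  rw [hsplit, integral_sub (hu.const_mul 2) hδ, integral_const_mul]
  ring

theorem abs_samvOp_sub_amvOp_le [OpensMeasurableSpace X] {K : ℝ≥0} (hu : LipschitzWith K u)
    (hr : 0 < r) (hx : μ (ball x r) < ∞)
    (hinv : IntegrableOn (fun y => (μ (ball y r)).toReal⁻¹) (ball x r) μ) :
    |samvOp μ u x r - amvOp μ u x r| ≤ K / 2 * (zr μ x r / r) := by
  have : IsFiniteMeasure (μ.restrict (ball x r)) := isFiniteMeasure_restrict.2 hx.ne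
  have hbound : ∀ᵐ y ∂μ.restrict (ball x r), |u y - u x| ≤ K * r := by
    refine ae_restrict_of_forall_mem measurableSet_ball fun y hy => ?_
    rw [← Real.dist_eq]
    exact (hu.dist_le_mul y x).trans (by gcongr; exact (mem_ball.1 hy).le)
  have hum : AEStronglyMeasurable (fun y => u y - u x) (μ.restrict (ball x r)) :=
    (hu.continuous.sub continuous_const).aestronglyMeasurable
  have hδ : IntegrableOn (fun y => 1 - (μ (ball x r)).toReal / (μ (ball y r)).toReal)
      (ball x r) μ := by
    simp_rw [div_eq_mul_inv]
    exact (integrable_const 1).sub (hinv.const_mul _)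
  rw [samvOp_sub_amvOp ((integrable_const _).mono' hum hbound)
      (hδ.bdd_mul hum (by simpa only [Real.norm_eq_abs] using hbound)),
    abs_mul, abs_neg, abs_of_pos (by positivity)]
  calc 1 / (2 * r ^ 2) * |⨍ y in ball x r,
        (u y - u x) * (1 - (μ (ball x r)).toReal / (μ (ball y r)).toReal) ∂μ|
      ≤ 1 / (2 * r ^ 2) * (K * r * zr μ x r) := by
        gcongr
        exact abs_setAverage_mul_le hbound hδ
    _ = K / 2 * (zr μ x r / r) := by
        field_simp

variable [OpensMeasurableSpace X] [SecondCountableTopology X] [SFinite μ]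

theorem Measurable.amvOp (hu : Measurable u) (r : ℝ) : Measurable fun x => amvOp μ u x r :=
  measurable_const.mul (Measurable.setAverage_ball (f := fun p : X × X => u p.2 - u p.1)
    (by fun_prop))

theorem Measurable.samvOp (hu : Measurable u) (r : ℝ) : Measurable fun x => samvOp μ u x r := by
  have hm := (measurable_measure_ball μ r).ennreal_toReal
  exact measurable_const.mul (Measurable.setAverage_ball
    (((hu.comp measurable_snd).sub (hu.comp measurable_fst)).mul
      (measurable_const.add ((hm.comp measurable_fst).div (hm.comp measurable_snd)))))

end Operators

/-- `f` and `g` are integrable together; otherwise both integrals are the junk value `0`. -/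
theorem abs_integral_sub_integral_le {α : Type*} [MeasurableSpace α] {ν : Measure α}
    {f g ψ : α → ℝ} (hψ : Integrable ψ ν) (hfg : AEStronglyMeasurable (fun a => f a - g a) ν)
    (h : ∀ᵐ a ∂ν, |f a - g a| ≤ ψ a) :
    |∫ a, f a ∂ν - ∫ a, g a ∂ν| ≤ ∫ a, ψ a ∂ν := by
  have hD : Integrable (fun a => f a - g a) ν := hψ.mono' hfg (by simpa only [Real.norm_eq_abs])
  by_cases hg : Integrable g ν
  · have hf : Integrable f ν := (hD.add hg).congr (ae_of_all _ fun a => sub_add_cancel _ _)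
    rw [← integral_sub hf hg, ← Real.norm_eq_abs]
    exact norm_integral_le_of_norm_le hψ (by simpa only [Real.norm_eq_abs])
  · have hf : ¬Integrable f ν := fun hf =>
      hg ((hf.sub hD).congr (ae_of_all _ fun a => sub_sub_cancel _ _))
    rw [integral_undef hf, integral_undef hg, sub_self, abs_zero]
    exact integral_nonneg_of_ae (h.mono fun a ha => (abs_nonneg _).trans ha)

theorem abs_integral_mul_samvOp_sub_integral_mul_amvOp_le {X : Type*} [MetricSpace X]
    [MeasurableSpace X] [OpensMeasurableSpace X] [SecondCountableTopology X] {μ : Measure X}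
    [SFinite μ] (hμ : ∀ x r, μ (ball x r) < ∞) {u : X → ℝ} {K : ℝ≥0} (hu : LipschitzWith K u)
    {φ : X → ℝ} (hφ : Continuous φ) (hφs : HasCompactSupport φ) {r : ℝ} (hr : 0 < r)
    (hz : LocallyIntegrable (fun x => zr μ x r) μ) :
    |∫ x, φ x * samvOp μ u x r ∂μ - ∫ x, φ x * amvOp μ u x r ∂μ|
      ≤ ∫ x, (K / 2 * |φ x|) * (zr μ x r / r) ∂μ := by
  refine abs_integral_sub_integral_le ?_ ?_ ?_
  · have h := (hz.integrable_smul_left_of_hasCompactSupport (by fun_prop : Continuous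
      fun x => K / 2 * |φ x|) (hφs.abs.mul_left)).div_const r
    simpa only [smul_eq_mul, mul_div_assoc] using h
  · exact (hφ.measurable.mul (hu.continuous.measurable.samvOp r)).sub
      (hφ.measurable.mul (hu.continuous.measurable.amvOp r)) |>.aestronglyMeasurable
  · filter_upwards [ae_integrableOn_inv_measure_ball hμ r] with x hx
    rw [← mul_sub, abs_mul, mul_comm (K / 2 : ℝ), mul_assoc]
    gcongr
    exact abs_samvOp_sub_amvOp_le hu hr (hμ x r) hx

/-- The signed Radon measure of the weak Laplacians is encoded as the difference `ν₁ − ν₂`. -/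
theorem stmt_9_general {X : Type*} [MetricSpace X] [MeasurableSpace X] [BorelSpace X]
    (μ : Measure X)
    (hμ : ∀ (x : X) (r : ℝ), 0 < r → 0 < μ (ball x r) ∧ μ (ball x r) < ∞)
    (hz : ∃ r₁ : ℝ, 0 < r₁ ∧ ∀ r : ℝ, 0 < r → r < r₁ →
      LocallyIntegrable (fun x => zr μ x r) μ)
    (hweak : ∀ φ : X → ℝ, Continuous φ → HasCompactSupport φ →
      Tendsto (fun r => ∫ x, φ x * (zr μ x r / r) ∂μ) (𝓝[>] (0 : ℝ)) (𝓝 0))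
    (u : X → ℝ) (K : ℝ≥0) (hu : LipschitzWith K u)
    (ν₁ ν₂ : Measure X) :
    (∀ φ : X → ℝ, Continuous φ → HasCompactSupport φ →
      Tendsto (fun r => ∫ x, φ x * amvOp μ u x r ∂μ) (𝓝[>] (0 : ℝ))
        (𝓝 (∫ x, φ x ∂ν₁ - ∫ x, φ x ∂ν₂))) ↔
    (∀ φ : X → ℝ, Continuous φ → HasCompactSupport φ →
      Tendsto (fun r => ∫ x, φ x * samvOp μ u x r ∂μ) (𝓝[>] (0 : ℝ))
        (𝓝 (∫ x, φ x ∂ν₁ - ∫ x, φ x ∂ν₂))) := by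
  obtain ⟨r₁, hr₁, hzloc⟩ := hz
  have hfin : ∀ x r, μ (ball x r) < ∞ := fun x r => by
    rcases lt_or_ge 0 r with hr | hr
    · exact (hμ x r hr).2
    · simp [ball_eq_empty.2 hr]
  have := sigmaFinite_of_measure_ball_lt_top hfin
  have := secondCountableTopology_of_measure_ball_pos fun x r hr => (hμ x r hr).1
  have hdiff : ∀ φ : X → ℝ, Continuous φ → HasCompactSupport φ →
      Tendsto (fun r => ∫ x, φ x * samvOp μ u x r ∂μ - ∫ x, φ x * amvOp μ u x r ∂μ)
        (𝓝[>] 0) (𝓝 0) := fun φ hφ hφs => by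
    refine squeeze_zero_norm' ?_ (hweak (fun x => K / 2 * |φ x|) (by fun_prop) hφs.abs.mul_left)
    filter_upwards [Ioo_mem_nhdsGT hr₁] with r ⟨hr, hrr₁⟩
    exact abs_integral_mul_samvOp_sub_integral_mul_amvOp_le hfin hu hφ hφs hr (hzloc r hr hrr₁)
  constructor <;> intro h φ hφ hφs
  · simpa using (h φ hφ hφs).add (hdiff φ hφ hφs)
  · simpa using (h φ hφ hφs).sub (hdiff φ hφ hφs)

/-- On a locally compact metric measure space with `z_r ∈ L¹_loc` for all
small `r` and `(z_r/r) μ ⇀ 0` as `r ↓ 0`, a Lipschitz function `u` admits a weak AMV Laplacian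
iff it admits a weak SAMV Laplacian, and the two coincide; here a signed Radon measure is
encoded as a difference `ν₁ − ν₂` of measures finite on compact sets. -/
theorem stmt_9 {X : Type*} [MetricSpace X] [MeasurableSpace X] [BorelSpace X]
    [LocallyCompactSpace X]
    (μ : Measure X)
    (hμ : ∀ (x : X) (r : ℝ), 0 < r → 0 < μ (ball x r) ∧ μ (ball x r) < ∞)
    (hz : ∃ r₁ : ℝ, 0 < r₁ ∧ ∀ r : ℝ, 0 < r → r < r₁ →
      LocallyIntegrable (fun x => zr μ x r) μ)
    (hweak : ∀ φ : X → ℝ, Continuous φ → HasCompactSupport φ →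
      Tendsto (fun r => ∫ x, φ x * (zr μ x r / r) ∂μ) (𝓝[>] (0 : ℝ)) (𝓝 0))
    (u : X → ℝ) (K : ℝ≥0) (hu : LipschitzWith K u)
    (ν₁ ν₂ : Measure X) (hν₁ : IsFiniteMeasureOnCompacts ν₁)
    (hν₂ : IsFiniteMeasureOnCompacts ν₂) :
    (∀ φ : X → ℝ, Continuous φ → HasCompactSupport φ →
      Tendsto (fun r => ∫ x, φ x * amvOp μ u x r ∂μ) (𝓝[>] (0 : ℝ))
        (𝓝 (∫ x, φ x ∂ν₁ - ∫ x, φ x ∂ν₂))) ↔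
    (∀ φ : X → ℝ, Continuous φ → HasCompactSupport φ →
      Tendsto (fun r => ∫ x, φ x * samvOp μ u x r ∂μ) (𝓝[>] (0 : ℝ))
        (𝓝 (∫ x, φ x ∂ν₁ - ∫ x, φ x ∂ν₂))) :=
  stmt_9_general μ hμ hz hweak u K hu ν₁ ν₂
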